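/- Let π and π' be partial non-adaptive policies, and suppose that for some ℓ ∈ [n] with ℓ ≤ length(π) and ℓ' ∈ [n] with ℓ' ≤ length(π'), the set {π'(1),…,π'(ℓ')} dominates the set {π(1),…,π(ℓ)}. Then Pr[cost(π') > ℓ'] ≤ Pr[cost(π) > ℓ]. -/

import Mathlib

open Finset

/-- Among the first `ℓ` tests of the partial non-adaptive policy `σ` on outcome `x`,
there are at least `k` ones or at least `n−k+1` zeros. -/
def Stops (n k : ℕ) (σ : List (Fin n)) (x : Fin n → Bool) (ℓ : ℕ) : Prop :=
  k ≤ ((σ.take ℓ).filter fun i => x i).length ∨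
    n - k + 1 ≤ ((σ.take ℓ).filter fun i => !x i).length

open Classical in
/-- The cost of a partial non-adaptive policy `σ` on outcome `x`: the least `ℓ ≤ length σ`
with at least `k` ones or at least `n−k+1` zeros among the first `ℓ` tests, and `n` if no
such `ℓ` exists. -/
noncomputable def cost (n k : ℕ) (σ : List (Fin n)) (x : Fin n → Bool) : ℕ :=
  if ∃ ℓ ≤ σ.length, Stops n k σ x ℓ then sInf {ℓ | Stops n k σ x ℓ} else n

open Classical in
/-- `Pr[P]` with respect to the product measure on `{0,1}^n` where `Pr[x_i = 1] = p_i`. -/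
noncomputable def pr {n : ℕ} (p : Fin n → ℝ) (P : (Fin n → Bool) → Prop) : ℝ :=
  ∑ x : Fin n → Bool, if P x then (∏ i, if x i then p i else 1 - p i) else 0

/-!
The event `ℓ < cost σ` says that the first `ℓ` tests of `σ` show fewer than `k` ones
and fewer than `n - k + 1` zeros. These two counts add up to `ℓ ≤ n`, so one of the two conditions
always holds and `Pr[cost σ > ℓ] = Pr[few ones] + Pr[few zeros] - 1`.

Let `S` and `S'` be the sets tested by `π` and `π'`. By Hall's theorem, domination from the right
gives an injection `S → S'` that never decreases an index, hence never decreases the probability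
of a one; domination from the left gives an injection that never increases an index, hence never
decreases the probability of a zero. Moving the tested variables one at a time along such an
injection can only make "fewer than `c` ones" (resp. zeros) less likely, which bounds both terms.
-/

theorem List.Nodup.length_filter_eq_card {α : Type*} [DecidableEq α] {l : List α} (hl : l.Nodup)
    (q : α → Bool) : (l.filter q).length = #{a ∈ l.toFinset | q a} := by
  rw [← List.toFinset_filter, List.toFinset_card_of_nodup (hl.filter q)]

theorem exists_injOn_le_of_card_filter_le {α : Type*} [LinearOrder α] {S T : Finset α}
    (h : ∀ a ∈ S, #{x ∈ S | a ≤ x} ≤ #{x ∈ T | a ≤ x}) :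
    ∃ f : α → α, Set.InjOn f S ∧ Set.MapsTo f S T ∧ ∀ a ∈ S, a ≤ f a := by
  obtain ⟨g, hg, hgT⟩ := (all_card_le_biUnion_card_iff_exists_injective
    fun a : S => {x ∈ T | (a : α) ≤ x}).1 fun A => by
      rcases A.eq_empty_or_nonempty with rfl | hA
      · simp
      obtain ⟨m, hmA, hm⟩ := A.exists_min_image (fun a : S => (a : α)) hA
      calc #A ≤ #{x ∈ S | (m : α) ≤ x} :=
            card_le_card_of_injOn Subtype.val (fun a ha => by simpa using hm a ha)
              Subtype.val_injective.injOn
        _ ≤ #{x ∈ T | (m : α) ≤ x} := h m m.2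
        _ ≤ #(A.biUnion fun a : S => {x ∈ T | (a : α) ≤ x}) :=
            card_le_card (subset_biUnion_of_mem (fun a : S => {x ∈ T | (a : α) ≤ x}) hmA)
  refine ⟨fun a => if ha : a ∈ S then g ⟨a, ha⟩ else a, fun a ha b hb hab => ?_,
    fun a ha => ?_, fun a ha => ?_⟩
  · simp only [mem_coe] at ha hb
    exact congrArg Subtype.val (hg (by simpa [ha, hb] using hab))
  · simpa [mem_coe.1 ha] using (mem_filter.1 (hgT ⟨a, ha⟩)).1
  · simpa [ha] using (mem_filter.1 (hgT ⟨a, ha⟩)).2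

theorem exists_injOn_ge_of_card_filter_le {α : Type*} [LinearOrder α] {S T : Finset α}
    (h : ∀ a ∈ S, #{x ∈ S | x ≤ a} ≤ #{x ∈ T | x ≤ a}) :
    ∃ f : α → α, Set.InjOn f S ∧ Set.MapsTo f S T ∧ ∀ a ∈ S, f a ≤ a :=
  exists_injOn_le_of_card_filter_le (α := αᵒᵈ) h

namespace KOfN

section Probability

open Classical

variable {n : ℕ} (p : Fin n → ℝ)

theorem pr_congr {P Q : (Fin n → Bool) → Prop} (h : ∀ x, P x ↔ Q x) : pr p P = pr p Q := by
  simp only [pr, h]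

theorem pr_true : pr p (fun _ => True) = 1 := by
  simp only [pr, if_true]
  rw [← Fintype.prod_sum fun i (b : Bool) => if b then p i else 1 - p i]
  simp

theorem pr_mono (hp : ∀ i, 0 ≤ p i ∧ p i ≤ 1) {P Q : (Fin n → Bool) → Prop}
    (h : ∀ x, P x → Q x) : pr p P ≤ pr p Q := by
  refine Finset.sum_le_sum fun x _ => ?_
  have hweight : 0 ≤ ∏ i, (if x i then p i else 1 - p i) :=
    Finset.prod_nonneg fun i _ => by split_ifs <;> linarith [hp i]
  split_ifs with hP hQ
  exacts [le_rfl, absurd (h x hP) hQ, hweight, le_rfl]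

theorem pr_and_of_or {P Q : (Fin n → Bool) → Prop} (h : ∀ x, P x ∨ Q x) :
    pr p (fun x => P x ∧ Q x) = pr p P + pr p Q - 1 := by
  rw [← pr_true p, eq_sub_iff_add_eq]
  simp only [pr, ← Finset.sum_add_distrib]
  refine Finset.sum_congr rfl fun x _ => ?_
  rcases h x with hx | hx <;> by_cases hP : P x <;> by_cases hQ : Q x <;> simp_all

theorem pr_eq_pr_one_sub (P : (Fin n → Bool) → Prop) :
    pr p P = pr (fun i => 1 - p i) (fun x => P fun i => !x i) := by
  refine Fintype.sum_equiv ⟨fun x i => !x i, fun x i => !x i, fun x => by simp, fun x => by simp⟩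
    _ _ fun x => ?_
  simp only [Equiv.coe_fn_mk, Bool.not_not]
  congr 1
  refine Finset.prod_congr rfl fun i _ => ?_
  cases x i <;> simp

theorem pr_eq_sum_insertNth {m : ℕ} (p : Fin (m + 1) → ℝ) (i : Fin (m + 1))
    (P : (Fin (m + 1) → Bool) → Prop) :
    pr p P = ∑ b : Bool, ∑ y : Fin m → Bool, if P (i.insertNth b y) then
      (if b then p i else 1 - p i) * ∏ j, (if y j then p (i.succAbove j) else 1 - p (i.succAbove j))
      else 0 := by
  rw [pr, ← (Fin.insertNthEquiv (fun _ => Bool) i).sum_comp, Fintype.sum_prod_type]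
  refine Fintype.sum_congr _ _ fun b => Fintype.sum_congr _ _ fun y => ?_
  refine if_congr Iff.rfl ?_ rfl
  simp only [Fin.insertNthEquiv_apply, Fin.prod_univ_succAbove _ i, Fin.insertNth_apply_same,
    Fin.insertNth_apply_succAbove]

theorem pr_split (i : Fin n) (P : (Fin n → Bool) → Prop) :
    pr p P = p i * pr p (fun x => P (Function.update x i true)) +
      (1 - p i) * pr p (fun x => P (Function.update x i false)) := by
  obtain ⟨m, rfl⟩ : ∃ m, n = m + 1 := ⟨n - 1, by have := i.pos; omega⟩
  simp only [pr_eq_sum_insertNth p i, Fin.update_insertNth, Fintype.sum_bool]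
  simp only [← mul_ite_zero, ← Finset.mul_sum, Bool.false_eq_true, if_true, if_false]
  ring

theorem card_filter_update (x : Fin n → Bool) {T : Finset (Fin n)} {j : Fin n} (hj : j ∈ T)
    (b : Bool) : #{i ∈ T | Function.update x j b i} = #{i ∈ T.erase j | x i} + b.toNat := by
  have hrest : {i ∈ T.erase j | Function.update x j b i} = {i ∈ T.erase j | x i} :=
    filter_congr fun i hi => by rw [Function.update_of_ne (ne_of_mem_erase hi)]
  conv_lhs => rw [← insert_erase hj, filter_insert, Function.update_self, hrest]
  cases b <;> simp [card_insert_of_notMem]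

theorem pr_card_filter_lt_eq_of_mem (c : ℕ) {T : Finset (Fin n)} {j : Fin n} (hj : j ∈ T) :
    pr p (fun x => #{i ∈ T | x i} < c) =
      p j * pr p (fun x => #{i ∈ T.erase j | x i} + 1 < c) +
        (1 - p j) * pr p (fun x => #{i ∈ T.erase j | x i} < c) := by
  rw [pr_split p j]
  simp only [card_filter_update _ hj, Bool.toNat_true, Bool.toNat_false, add_zero]

theorem pr_card_filter_lt_le_of_injOn (hp : ∀ i, 0 ≤ p i ∧ p i ≤ 1) {S T : Finset (Fin n)}
    {f : Fin n → Fin n} (hf : Set.InjOn f S) (hST : Set.MapsTo f S T)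
    (hpf : ∀ i ∈ S, p i ≤ p (f i)) (c : ℕ) :
    pr p (fun x => #{i ∈ T | x i} < c) ≤ pr p (fun x => #{i ∈ S | x i} < c) := by
  induction S using Finset.induction_on generalizing T c with
  | empty =>
    exact pr_mono p hp fun x hx => by
      rw [filter_empty, card_empty]
      exact Nat.zero_lt_of_lt hx
  | insert a S ha ih =>
    have hfaT : f a ∈ T := hST (mem_insert_self a S)
    have hST' : Set.MapsTo f S (T.erase (f a)) := fun s hs =>
      mem_erase.2 ⟨fun h => ha (hf (by simp [hs]) (by simp) h ▸ hs), hST (mem_insert_of_mem hs)⟩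
    have hf' : Set.InjOn f S := hf.mono (by simp)
    have hpf' : ∀ s ∈ S, p s ≤ p (f s) := fun s hs => hpf s (mem_insert_of_mem hs)
    have hone : pr p (fun x => #{i ∈ T.erase (f a) | x i} + 1 < c) ≤
        pr p (fun x => #{i ∈ S | x i} + 1 < c) :=
      calc _ = pr p (fun x => #{i ∈ T.erase (f a) | x i} < c - 1) := pr_congr p fun x => by omega
        _ ≤ pr p (fun x => #{i ∈ S | x i} < c - 1) := ih hf' hST' hpf' (c - 1)
        _ = _ := pr_congr p fun x => by omega
    have hzero := ih hf' hST' hpf' c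
    have hmono : pr p (fun x => #{i ∈ S | x i} + 1 < c) ≤ pr p (fun x => #{i ∈ S | x i} < c) :=
      pr_mono p hp fun x hx => by omega
    have hpa := hpf a (mem_insert_self a S)
    have hpfa := hp (f a)
    rw [pr_card_filter_lt_eq_of_mem p c hfaT, pr_card_filter_lt_eq_of_mem p c (mem_insert_self a S),
      erase_insert ha]
    calc _ ≤ p (f a) * pr p (fun x => #{i ∈ S | x i} + 1 < c) +
          (1 - p (f a)) * pr p (fun x => #{i ∈ S | x i} < c) := by gcongr <;> linarith
      _ ≤ _ := by nlinarith

end Probability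

section Cost

variable {n k : ℕ} {σ : List (Fin n)} {x : Fin n → Bool}

theorem stops_mono {m ℓ : ℕ} (hmℓ : m ≤ ℓ) (h : Stops n k σ x m) : Stops n k σ x ℓ := by
  have hsub : (σ.take m).Sublist (σ.take ℓ) := by
    simpa [List.take_take, Nat.min_eq_left hmℓ] using (σ.take ℓ).take_sublist m
  exact h.imp (fun h => h.trans (hsub.filter _).length_le)
    (fun h => h.trans (hsub.filter _).length_le)

theorem stops_of_le_length (hkn : k ≤ n) (hn : n ≤ σ.length) : Stops n k σ x n := by
  have h := (σ.take n).length_eq_length_filter_add fun i => x i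
  rw [List.length_take, Nat.min_eq_left hn] at h
  unfold Stops
  omega

theorem lt_cost_iff {ℓ : ℕ} (hkn : k ≤ n) (hℓL : ℓ ≤ σ.length) (hℓn : ℓ ≤ n) :
    ℓ < cost n k σ x ↔ ¬Stops n k σ x ℓ := by
  constructor
  · intro hlt hℓ
    rw [cost, if_pos ⟨ℓ, hℓL, hℓ⟩] at hlt
    exact hlt.not_ge (Nat.sInf_le hℓ)
  · intro hℓ
    rw [cost]
    split_ifs with hstop
    · obtain ⟨m, -, hm⟩ := hstop
      by_contra! hle
      exact hℓ (stops_mono hle (Nat.sInf_mem (s := {ℓ | Stops n k σ x ℓ}) ⟨m, hm⟩))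
    · refine hℓn.lt_of_ne fun hℓn => hℓ ?_
      subst hℓn
      exact stops_of_le_length hkn hℓL

theorem lt_cost_iff_card (hkn : k ≤ n) (hσ : σ.Nodup) {ℓ : ℕ} (hℓL : ℓ ≤ σ.length)
    (hℓn : ℓ ≤ n) (x : Fin n → Bool) :
    ℓ < cost n k σ x ↔
      #{i ∈ (σ.take ℓ).toFinset | x i} < k ∧ #{i ∈ (σ.take ℓ).toFinset | !x i} < n - k + 1 := by
  have hS : (σ.take ℓ).Nodup := hσ.sublist (σ.take_sublist ℓ)
  rw [lt_cost_iff hkn hℓL hℓn, Stops, hS.length_filter_eq_card, hS.length_filter_eq_card]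
  omega

theorem pr_lt_cost_eq (p : Fin n → ℝ) (hkn : k ≤ n) (hσ : σ.Nodup) {ℓ : ℕ}
    (hℓL : ℓ ≤ σ.length) (hℓn : ℓ ≤ n) :
    pr p (fun x => ℓ < cost n k σ x) =
      pr p (fun x => #{i ∈ (σ.take ℓ).toFinset | x i} < k) +
        pr (fun i => 1 - p i) (fun x => #{i ∈ (σ.take ℓ).toFinset | x i} < n - k + 1) - 1 := by
  have hsplit (x : Fin n → Bool) : #{i ∈ (σ.take ℓ).toFinset | x i} < k ∨
      #{i ∈ (σ.take ℓ).toFinset | !x i} < n - k + 1 := by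
    have hsum := (σ.take ℓ).toFinset.card_filter_add_card_filter_not fun i => x i
    have hcard := (σ.take ℓ).toFinset.card_le_univ
    simp only [Fintype.card_fin, Bool.not_eq_true, Bool.not_eq_true'] at hsum hcard ⊢
    omega
  rw [pr_congr p (lt_cost_iff_card hkn hσ hℓL hℓn), pr_and_of_or p hsplit,
    pr_eq_pr_one_sub p fun x => #{i ∈ (σ.take ℓ).toFinset | !x i} < _]
  simp only [Bool.not_not]

end Cost

end KOfN

open KOfN in
theorem stmt_9_general (n k : ℕ) (hkn : k ≤ n)
    (p : Fin n → ℝ) (hp : ∀ i, 0 < p i ∧ p i < 1)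
    (hmono : ∀ i j : Fin n, i ≤ j → p i ≤ p j)
    (π π' : List (Fin n)) (hπ : π.Nodup) (hπ' : π'.Nodup)
    (ℓ ℓ' : ℕ)
    (hℓn : ℓ ≤ n) (hℓL : ℓ ≤ π.length)
    (hℓ'n : ℓ' ≤ n) (hℓ'L : ℓ' ≤ π'.length)
    (hdom : ∀ h ∈ Finset.Icc 1 n,
      ((π.take ℓ).toFinset.filter fun i : Fin n => (i : ℕ) < h).card ≤
        ((π'.take ℓ').toFinset.filter fun i : Fin n => (i : ℕ) < h).card ∧
      ((π.take ℓ).toFinset.filter fun i : Fin n => n - h ≤ (i : ℕ)).card ≤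
        ((π'.take ℓ').toFinset.filter fun i : Fin n => n - h ≤ (i : ℕ)).card) :
    pr p (fun x => ℓ' < cost n k π' x) ≤ pr p (fun x => ℓ < cost n k π x) := by
  obtain ⟨f, hf, hfST, hle⟩ := exists_injOn_le_of_card_filter_le
      (S := (π.take ℓ).toFinset) (T := (π'.take ℓ').toFinset) fun (a : Fin n) _ => by
    have ha := a.isLt
    simpa only [Nat.sub_sub_self ha.le, Fin.le_iff_val_le_val] using
      (hdom (n - a) (Finset.mem_Icc.2 ⟨by omega, by omega⟩)).2
  obtain ⟨g, hg, hgST, hge⟩ := exists_injOn_ge_of_card_filter_le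
      (S := (π.take ℓ).toFinset) (T := (π'.take ℓ').toFinset) fun (a : Fin n) _ => by
    have ha := a.isLt
    simpa only [Nat.lt_add_one_iff, Fin.le_iff_val_le_val] using
      (hdom (a + 1 : ℕ) (Finset.mem_Icc.2 ⟨by omega, by omega⟩)).1
  have hones := pr_card_filter_lt_le_of_injOn p (fun i => ⟨(hp i).1.le, (hp i).2.le⟩) hf hfST
    (fun i hi => hmono _ _ (hle i hi)) k
  have hzeros := pr_card_filter_lt_le_of_injOn (fun i => 1 - p i)
    (fun i => ⟨by linarith [hp i], by linarith [hp i]⟩) hg hgST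
    (fun i hi => by linarith [hmono _ _ (hge i hi)]) (n - k + 1)
  rw [pr_lt_cost_eq p hkn hπ hℓL hℓn, pr_lt_cost_eq p hkn hπ' hℓ'L hℓ'n]
  linarith

/-- Let `π` and `π'` be partial non-adaptive policies (injective sequences of
indices) and suppose that for some `ℓ ∈ [n]`, `ℓ ≤ length π`, and `ℓ' ∈ [n]`,
`ℓ' ≤ length π'`, the set `{π'(1),…,π'(ℓ')}` dominates the set `{π(1),…,π(ℓ)}`. Then
`Pr[cost(π') > ℓ'] ≤ Pr[cost(π) > ℓ]`. -/
theorem stmt_9 (n k : ℕ) (hk1 : 1 ≤ k) (hkn : k ≤ n)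
    (p : Fin n → ℝ) (hp : ∀ i, 0 < p i ∧ p i < 1)
    (hmono : ∀ i j : Fin n, i ≤ j → p i ≤ p j)
    (π π' : List (Fin n)) (hπ : π.Nodup) (hπ' : π'.Nodup)
    (ℓ ℓ' : ℕ)
    (hℓ1 : 1 ≤ ℓ) (hℓn : ℓ ≤ n) (hℓL : ℓ ≤ π.length)
    (hℓ'1 : 1 ≤ ℓ') (hℓ'n : ℓ' ≤ n) (hℓ'L : ℓ' ≤ π'.length)
    (hcard : (π.take ℓ).toFinset.card ≤ (π'.take ℓ').toFinset.card)
    (hdom : ∀ h ∈ Finset.Icc 1 n,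
      ((π.take ℓ).toFinset.filter fun i : Fin n => (i : ℕ) < h).card ≤
        ((π'.take ℓ').toFinset.filter fun i : Fin n => (i : ℕ) < h).card ∧
      ((π.take ℓ).toFinset.filter fun i : Fin n => n - h ≤ (i : ℕ)).card ≤
        ((π'.take ℓ').toFinset.filter fun i : Fin n => n - h ≤ (i : ℕ)).card) :
    pr p (fun x => ℓ' < cost n k π' x) ≤ pr p (fun x => ℓ < cost n k π x) :=
  stmt_9_general n k hkn p hp hmono π π' hπ hπ' ℓ ℓ' hℓn hℓL hℓ'n hℓ'L hdom
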